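/- Suppose Hypothesis (H) holds. If μ is a nonzero finite nonnegative Borel measure on M satisfying ℒμ = λ₀ μ for some λ₀ > 0, then the support of μ is all of M. -/

import Mathlib

/-!
If `μ U = 0` for an open `U ≠ ∅`, then integrating the eigen-relation `μ.bind Pⁿ = λ₀ⁿ • μ` over
`U` shows that `μ`-almost every point never reaches `U`. But `μ` charges the non-escaping set
`{x | P x M ≠ 0}` (otherwise `λ₀ μ(M) = ∫ P(x, M) dμ = 0`), and by irreducibility every
non-escaping point reaches `U` with positive probability.
-/

open MeasureTheory Filter Topology

noncomputable section

variable {M : Type*}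

/-- The iterated transition kernel: `iterP P 0 x = δ_x` (identity kernel), so that
`iterP P 1 = P` and `iterP P (n+1) x A = ∫ iterP P n y A ∂(P x)`. -/
def iterP [MeasurableSpace M] (P : M → Measure M) : ℕ → M → Measure M
  | 0 => fun x => Measure.dirac x
  | n + 1 => fun x => (P x).bind (iterP P n)

/-- Hypothesis (H) of the paper: `P` is a measurable sub-Markovian kernel; (H1) each
`P x` is absolutely continuous w.r.t. `ρ` and `x ↦ dP(x,·)/dρ` is continuous into `L¹(ρ)`;
(H2) `ρ(M∖Z) > 0` where `Z = {x | P(x,M) = 0}`, and from every non-escaping point every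
nonempty open set is reached with positive probability in some positive time. -/
structure HypH [MetricSpace M] [MeasurableSpace M] (P : M → Measure M) (ρ : Measure M) : Prop where
  meas : Measurable P
  subMarkov : ∀ x, P x Set.univ ≤ 1
  absCont : ∀ x, P x ≪ ρ
  densityCont : ∀ ε : ℝ, 0 < ε → ∃ δ : ℝ, 0 < δ ∧ ∀ x z : M, dist x z < δ →
      (∫⁻ y, ((P x).rnDeriv ρ y - (P z).rnDeriv ρ y)
        + ((P z).rnDeriv ρ y - (P x).rnDeriv ρ y) ∂ρ) < ENNReal.ofReal ε
  rhoPos : 0 < ρ {x | P x Set.univ ≠ 0}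
  irred : ∀ x, P x Set.univ ≠ 0 → ∀ A : Set M, IsOpen A → A.Nonempty →
      ∃ n : ℕ, 0 < n ∧ 0 < iterP P n x A

section Eigenmeasure

variable [MeasurableSpace M] {P : M → Measure M} {μ : Measure M} {c : ENNReal}

lemma measurable_iterP (hP : Measurable P) : ∀ n, Measurable (iterP P n)
  | 0 => Measure.measurable_dirac
  | n + 1 => (Measure.measurable_bind' (measurable_iterP hP n)).comp hP

lemma bind_iterP_eq_pow_smul (hP : Measurable P) (heig : μ.bind P = c • μ) :
    ∀ n, μ.bind (iterP P n) = c ^ n • μ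
  | 0 => by simp [iterP]
  | n + 1 => by
    have hbind : μ.bind (iterP P (n + 1)) = (μ.bind P).bind (iterP P n) :=
      (Measure.bind_bind hP.aemeasurable (measurable_iterP hP n).aemeasurable).symm
    rw [hbind, heig, Measure.bind_smul, bind_iterP_eq_pow_smul hP heig n, smul_smul, pow_succ,
      mul_comm]

lemma ae_forall_iterP_apply_eq_zero (hP : Measurable P) (heig : μ.bind P = c • μ) {s : Set M}
    (hs : MeasurableSet s) (hμs : μ s = 0) : ∀ᵐ x ∂μ, ∀ n, iterP P n x s = 0 := by
  refine ae_all_iff.mpr fun n => ?_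
  have hint : ∫⁻ x, iterP P n x s ∂μ = 0 := by
    rw [← Measure.bind_apply hs (measurable_iterP hP n).aemeasurable,
      bind_iterP_eq_pow_smul hP heig n, Measure.smul_apply, hμs, smul_zero]
  exact (lintegral_eq_zero_iff ((Measure.measurable_coe hs).comp (measurable_iterP hP n))).mp hint

lemma frequently_apply_univ_ne_zero_of_bind_eq_smul (hP : Measurable P)
    (heig : μ.bind P = c • μ) (hc : c ≠ 0) (hμ : μ ≠ 0) : ∃ᵐ x ∂μ, P x Set.univ ≠ 0 := by
  intro hZ
  have hint : ∫⁻ x, P x Set.univ ∂μ = 0 := by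
    rw [lintegral_congr_ae (hZ.mono fun _ => not_not.mp), lintegral_zero]
  rw [← Measure.bind_apply MeasurableSet.univ hP.aemeasurable, heig, Measure.smul_apply,
    smul_eq_mul, mul_eq_zero, Measure.measure_univ_eq_zero] at hint
  exact hint.elim hc hμ

end Eigenmeasure

theorem eigenmeasure_full_support_of_hypH_general
    [MetricSpace M] [MeasurableSpace M] [BorelSpace M]
    (ρ : Measure M) (P : M → Measure M) (hH : HypH P ρ)
    (μ : Measure M) (hne : μ ≠ 0)
    (lam₀ : ℝ) (hlam₀ : 0 < lam₀) (heig : μ.bind P = ENNReal.ofReal lam₀ • μ) :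
    ∀ U : Set M, IsOpen U → U.Nonempty → 0 < μ U := by
  intro U hU hUne
  rw [pos_iff_ne_zero]
  intro hμU
  have hnonescaping := frequently_apply_univ_ne_zero_of_bind_eq_smul hH.meas heig
    (ENNReal.ofReal_pos.mpr hlam₀).ne' hne
  have hnever := ae_forall_iterP_apply_eq_zero hH.meas heig hU.measurableSet hμU
  obtain ⟨x, hx, hxU⟩ := (hnonescaping.and_eventually hnever).exists
  obtain ⟨n, -, hn⟩ := hH.irred x hx U hU hUne
  exact hn.ne' (hxU n)

/-- **Lemma (full support of eigenmeasures).** Under Hypothesis (H), any nonzero finite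
nonnegative Borel measure `μ` with `ℒμ = λ₀μ` for some `λ₀ > 0` has full support: every
nonempty open set has positive `μ`-measure. -/
theorem eigenmeasure_full_support_of_hypH
    [MetricSpace M] [CompactSpace M] [MeasurableSpace M] [BorelSpace M]
    (ρ : Measure M) [IsFiniteMeasure ρ] (P : M → Measure M) (hH : HypH P ρ)
    (μ : Measure M) (hfin : IsFiniteMeasure μ) (hne : μ ≠ 0)
    (lam₀ : ℝ) (hlam₀ : 0 < lam₀) (heig : μ.bind P = ENNReal.ofReal lam₀ • μ) :
    ∀ U : Set M, IsOpen U → U.Nonempty → 0 < μ U :=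
  eigenmeasure_full_support_of_hypH_general ρ P hH μ hne lam₀ hlam₀ heig
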